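/- For points α = (q,p) and α' = (q',p') in {0,…,N-1}², the trace of the product of phase-point operators satisfies tr(Â(α)·Â(α')) = (1/(4N))·δ_N(q'-q)·δ_N(p'-p), where δ_N is the periodic delta. -/

import Mathlib

open Complex Matrix BigOperators

/-- Cyclic shift `Û|n⟩ = |n+1⟩`. -/
def Uhat (N : ℕ) : Matrix (ZMod N) (ZMod N) ℂ :=
  fun k l => if k = l + 1 then 1 else 0

/-- Diagonal phase `V̂|n⟩ = e^{2πin/N}|n⟩`. -/
noncomputable def Vhat (N : ℕ) : Matrix (ZMod N) (ZMod N) ℂ :=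
  fun k l => if k = l then Complex.exp (2 * Real.pi * Complex.I * (k.val : ℂ) / N) else 0

/-- Reflection `R̂|n⟩ = |-n⟩`. -/
def Rhat (N : ℕ) : Matrix (ZMod N) (ZMod N) ℂ :=
  fun k l => if k = -l then 1 else 0

/-- Phase-point operator `Â(q,p) = (1/(2N)) Û^q R̂ V̂^{-p} e^{iπpq/N}`. -/
noncomputable def Ahat (N : ℕ) [NeZero N] (q p : ℤ) : Matrix (ZMod N) (ZMod N) ℂ :=
  (Complex.exp (Real.pi * Complex.I * (p : ℂ) * (q : ℂ) / N) / (2 * N)) •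
    ((Uhat N) ^ q * Rhat N * (Vhat N) ^ (-p))

/-- Periodic Dirac delta `δ_N(m) = (1/N) Σ_n e^{-2πimn/N}`. -/
noncomputable def deltaN (N : ℕ) (m : ℤ) : ℂ :=
  (1 / (N : ℂ)) * ∑ n ∈ Finset.range N,
    Complex.exp (-(2 * Real.pi * Complex.I * (m : ℂ) * (n : ℂ)) / N)

lemma Ncc (N : ℕ) [NeZero N] : (N:ℂ) ≠ 0 := Nat.cast_ne_zero.2 (NeZero.ne N)

lemma exp_two_pi_int (k : ℤ) : Complex.exp (2 * Real.pi * Complex.I * k) = 1 := by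
  rw [show (2 * (Real.pi:ℂ) * Complex.I * k : ℂ) = k * (2 * Real.pi * Complex.I) by ring]
  exact Complex.exp_int_mul_two_pi_mul_I k

lemma exp_congr_int {a b : ℂ} (k : ℤ) (h : a = b + k * (2 * Real.pi * Complex.I)) :
    Complex.exp a = Complex.exp b := by
  rw [h, Complex.exp_add,
    show ((k:ℂ) * (2*(Real.pi:ℂ)*Complex.I)) = 2*(Real.pi:ℂ)*Complex.I*k by ring,
    exp_two_pi_int]
  ring

lemma sum_exp (N : ℕ) [NeZero N] (m : ℤ) :
    ∑ n ∈ Finset.range N, Complex.exp (2 * Real.pi * Complex.I * m * n / N) =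
      if (N:ℤ) ∣ m then (N:ℂ) else 0 := by
  have hN := Ncc N
  have h2 : (2*(Real.pi:ℂ)*Complex.I) ≠ 0 := by
    simp [Real.pi_ne_zero, Complex.I_ne_zero]
  have hterm : ∀ n : ℕ, Complex.exp (2 * Real.pi * Complex.I * m * n / N) =
      Complex.exp (2 * Real.pi * Complex.I * m / N) ^ n := by
    intro n
    rw [← Complex.exp_nat_mul]
    ring_nf
  split_ifs with h
  · obtain ⟨c, rfl⟩ := h
    have h1 : ∀ n : ℕ, Complex.exp (2 * Real.pi * Complex.I * ((N:ℂ)*(c:ℂ)) * n / N) = 1 := by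
      intro n
      rw [show (2 * (Real.pi:ℂ) * Complex.I * ((N:ℂ)*(c:ℂ)) * n / N : ℂ)
          = 2*(Real.pi:ℂ)*Complex.I*((c*n : ℤ):ℂ) by push_cast; field_simp]
      exact exp_two_pi_int _
    push_cast
    rw [Finset.sum_congr rfl fun n _ => h1 n]
    simp
  · have hz : Complex.exp (2 * Real.pi * Complex.I * m / N) ≠ 1 := by
      intro hcon
      rcases Complex.exp_eq_one_iff.1 hcon with ⟨n, hn⟩
      apply h
      refine ⟨n, ?_⟩
      rw [mul_comm]
      have key : (2*(Real.pi:ℂ)*Complex.I) * (m:ℂ) = (2*(Real.pi:ℂ)*Complex.I) * ((n:ℂ)*N) := by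
        field_simp at hn
        linear_combination (2*(Real.pi:ℂ)*Complex.I) * hn
      have := mul_left_cancel₀ h2 key
      exact_mod_cast this
    rw [Finset.sum_congr rfl fun n _ => hterm n, geom_sum_eq hz]
    have hN1 : Complex.exp (2 * Real.pi * Complex.I * m / N) ^ N = 1 := by
      rw [← Complex.exp_nat_mul,
        show ((N:ℂ) * (2*(Real.pi:ℂ)*Complex.I*m/N)) = 2*(Real.pi:ℂ)*Complex.I*m by
          field_simp]
      exact exp_two_pi_int m
    rw [hN1]
    simp

lemma deltaN_aux (N : ℕ) [NeZero N] (m : ℤ) :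
    (1 / (N : ℂ)) * ∑ n ∈ Finset.range N,
      Complex.exp (-(2 * Real.pi * Complex.I * (m : ℂ) * (n : ℂ)) / N)
    = if (N:ℤ) ∣ m then 1 else 0 := by
  have : ∀ n : ℕ, Complex.exp (-(2 * Real.pi * Complex.I * (m : ℂ) * (n : ℂ)) / N)
      = Complex.exp (2 * Real.pi * Complex.I * ((-m : ℤ):ℂ) * n / N) := by
    intro n; push_cast; ring_nf
  rw [Finset.sum_congr rfl fun n _ => this n, sum_exp N (-m)]
  rw [if_congr (dvd_neg (α := ℤ)) rfl rfl]
  split_ifs with h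
  · have := Ncc N; field_simp
  · simp

lemma not_dvd_small (N : ℕ) [NeZero N] {d : ℤ} (h1 : -(N:ℤ) < d) (h2 : d < N) (h3 : d ≠ 0) :
    ¬ (N:ℤ) ∣ d := by
  rintro ⟨c, rfl⟩
  have hN : (0:ℤ) < N := by exact_mod_cast Nat.pos_of_ne_zero (NeZero.ne N)
  have hc1 : c < 1 := by nlinarith
  have hc2 : -1 < c := by nlinarith
  have : c = 0 := by omega
  simp [this] at h3

lemma zmod_sum (N : ℕ) [NeZero N] (f : ZMod N → ℂ) :
    ∑ k : ZMod N, f k = ∑ n ∈ Finset.range N, f n := by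
  refine (Finset.sum_nbij' (fun k : ZMod N => k.val) (fun n : ℕ => (n : ZMod N))
    ?_ ?_ ?_ ?_ ?_).symm.symm
  · intro a _; exact Finset.mem_range.2 (ZMod.val_lt a)
  · intro a _; exact Finset.mem_univ _
  · intro a _; simp [ZMod.natCast_val, ZMod.cast_id]
  · intro a ha; exact ZMod.val_cast_of_lt (Finset.mem_range.1 ha)
  · intro a _; rw [ZMod.natCast_val, ZMod.cast_id]

lemma Upow (N : ℕ) [NeZero N] (m : ℕ) (k l : ZMod N) :
    (((Uhat N) ^ m : Matrix (ZMod N) (ZMod N) ℂ)) k l = if k = l + (m : ZMod N) then 1 else 0 := by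
  induction m generalizing k l with
  | zero => simp [Matrix.one_apply]
  | succ m ih =>
    rw [pow_succ, Matrix.mul_apply]
    rw [Finset.sum_eq_single (l + 1)]
    · rw [ih]
      simp only [Uhat, if_pos rfl, mul_one]
      have harg : l + 1 + (m : ZMod N) = l + ((m + 1 : ℕ) : ZMod N) := by push_cast; ring
      rw [harg]
      simp
    · intro b _ hb; simp [Uhat, hb]
    · intro h; exact absurd (Finset.mem_univ _) h

lemma Vpow (N : ℕ) [NeZero N] (m : ℕ) (k l : ZMod N) :
    (((Vhat N) ^ m : Matrix (ZMod N) (ZMod N) ℂ)) k l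
      = if k = l then Complex.exp (2 * Real.pi * Complex.I * m * (l.val : ℂ) / N) else 0 := by
  induction m generalizing k l with
  | zero => simp [Matrix.one_apply]
  | succ m ih =>
    rw [pow_succ, Matrix.mul_apply]
    rw [Finset.sum_eq_single l]
    · rw [ih]
      simp only [Vhat, if_pos rfl]
      by_cases hkl : k = l
      · rw [if_pos hkl]
        rw [if_pos hkl]
        rw [if_pos trivial, ← Complex.exp_add]
        congr 1
        push_cast
        ring
      · rw [if_neg hkl, if_neg hkl, zero_mul]
    · intro b _ hb; simp [Vhat, hb]
    · intro h; exact absurd (Finset.mem_univ _) h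

lemma VN (N : ℕ) [NeZero N] : (Vhat N) ^ N = 1 := by
  ext k l
  rw [Vpow, Matrix.one_apply]
  by_cases hkl : k = l
  · simp only [if_pos hkl]
    have harg : (2 * (Real.pi:ℂ) * Complex.I * N * (l.val : ℂ) / N)
        = 2 * (Real.pi:ℂ) * Complex.I * ((l.val : ℤ) : ℂ) := by
      have hN := Ncc N
      push_cast
      field_simp
    rw [harg, exp_two_pi_int]
  · simp [hkl]

lemma V_det_unit (N : ℕ) [NeZero N] : IsUnit (Vhat N).det := by
  rw [← Matrix.isUnit_iff_isUnit_det]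
  exact IsUnit.of_pow_eq_one (VN N) (NeZero.ne N)

lemma Vzpow (N : ℕ) [NeZero N] (p : ℤ) (h0 : 0 ≤ p) (h1 : p ≤ N) :
    (Vhat N) ^ (-p) = (Vhat N) ^ ((N - p.toNat : ℕ)) := by
  have hdet := V_det_unit N
  have hz : (Vhat N) ^ (-p) * (Vhat N) ^ p = 1 := by
    rw [← Matrix.zpow_add hdet]; simp
  have hp : (Vhat N) ^ p = (Vhat N) ^ (p.toNat : ℕ) := by
    rw [← zpow_natCast (Vhat N) p.toNat]
    congr 1
    omega
  have hnp : (Vhat N) ^ (p.toNat : ℕ) * (Vhat N) ^ ((N - p.toNat : ℕ)) = 1 := by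
    rw [← pow_add, show p.toNat + (N - p.toNat) = N by omega, VN]
  calc (Vhat N) ^ (-p) = (Vhat N) ^ (-p) * ((Vhat N) ^ (p.toNat : ℕ) * (Vhat N) ^ ((N - p.toNat : ℕ))) := by
        rw [hnp, mul_one]
    _ = ((Vhat N) ^ (-p) * (Vhat N) ^ p) * (Vhat N) ^ ((N - p.toNat : ℕ)) := by
        rw [hp, mul_assoc]
    _ = (Vhat N) ^ ((N - p.toNat : ℕ)) := by rw [hz, one_mul]

lemma URV (N : ℕ) [NeZero N] (qn s : ℕ) (k l : ZMod N) :
    (((Uhat N) ^ qn * Rhat N * (Vhat N) ^ s : Matrix (ZMod N) (ZMod N) ℂ)) k l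
      = (if k = (qn : ZMod N) - l then 1 else 0)
          * Complex.exp (2 * Real.pi * Complex.I * s * (l.val : ℂ) / N) := by
  rw [Matrix.mul_apply]
  have hUR : ∀ j : ZMod N, ((Uhat N) ^ qn * Rhat N) k j = if k = (qn : ZMod N) - j then 1 else 0 := by
    intro j
    rw [Matrix.mul_apply]
    rw [Finset.sum_eq_single (-j)]
    · rw [Upow]
      simp only [Rhat, if_pos rfl, mul_one]
      have harg : (-j + (qn : ZMod N)) = (qn : ZMod N) - j := by ring
      rw [harg]
      simp
    · intro b _ hb
      have : ¬ b = -j := hb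
      simp [Rhat, this]
    · intro h; exact absurd (Finset.mem_univ _) h
  rw [Finset.sum_eq_single l]
  · rw [hUR, Vpow, if_pos rfl]
  · intro b _ hb; rw [Vpow, if_neg hb, mul_zero]
  · intro h; exact absurd (Finset.mem_univ _) h

lemma Eval (N : ℕ) [NeZero N] (s : ℕ) (m : ℤ) :
    Complex.exp (2 * Real.pi * Complex.I * s * ((((m : ZMod N)).val : ℕ) : ℂ) / N)
      = Complex.exp (2 * Real.pi * Complex.I * s * (m : ℂ) / N) := by
  have hN := Ncc N
  have hval : ((((m : ZMod N)).val : ℕ) : ℂ) = (m : ℂ) - (N:ℂ) * ((m / (N:ℤ) : ℤ) : ℂ) := by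
    have h1 : (((m : ZMod N)).val : ℤ) = m % N := ZMod.val_intCast m
    have h2 : m % (N:ℤ) = m - (N:ℤ) * (m / N) := by rw [Int.emod_def]
    have := h1.trans h2
    exact_mod_cast congrArg (Int.cast : ℤ → ℂ) this
  refine exp_congr_int (-(s * (m / N))) ?_
  rw [hval]
  push_cast
  field_simp
  ring

lemma natCast_inj_small (N : ℕ) [NeZero N] {a b : ℕ} (ha : a < N) (hb : b < N) :
    ((a : ZMod N) = (b : ZMod N)) ↔ a = b := by
  constructor
  · intro h
    have := congrArg ZMod.val h
    rwa [ZMod.val_cast_of_lt ha, ZMod.val_cast_of_lt hb] at this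
  · intro h; rw [h]

lemma traceMM (N : ℕ) [NeZero N] (qn q'n s s' : ℕ) :
    Matrix.trace ((Uhat N ^ qn * Rhat N * Vhat N ^ s) * (Uhat N ^ q'n * Rhat N * Vhat N ^ s')) =
      if (qn : ZMod N) = (q'n : ZMod N) then
        ∑ n ∈ Finset.range N,
          Complex.exp (2 * Real.pi * Complex.I * s * (((q'n : ℤ) : ℂ) - (n : ℂ)) / N)
            * Complex.exp (2 * Real.pi * Complex.I * s' * (n : ℂ) / N)
      else 0 := by
  have hdiag : ∀ k : ZMod N,
      ((Uhat N ^ qn * Rhat N * Vhat N ^ s) * (Uhat N ^ q'n * Rhat N * Vhat N ^ s')) k k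
        = if (qn : ZMod N) = (q'n : ZMod N) then
            Complex.exp (2 * Real.pi * Complex.I * s * ((((q'n : ZMod N) - k).val : ℕ) : ℂ) / N)
              * Complex.exp (2 * Real.pi * Complex.I * s' * ((k.val : ℕ) : ℂ) / N)
          else 0 := by
    intro k
    rw [Matrix.mul_apply]
    rw [Finset.sum_eq_single ((q'n : ZMod N) - k)]
    · rw [URV, URV]
      rw [if_pos rfl]
      by_cases hC : (qn : ZMod N) = (q'n : ZMod N)
      · have hcond : k = (qn : ZMod N) - ((q'n : ZMod N) - k) := by rw [hC]; ring
        rw [if_pos hcond, if_pos hC]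
        ring
      · have hcond : ¬ k = (qn : ZMod N) - ((q'n : ZMod N) - k) := by
          intro hcon
          have h0 : (qn : ZMod N) - (q'n : ZMod N) = 0 := by linear_combination -1 * hcon
          exact hC (sub_eq_zero.mp h0)
        rw [if_neg hcond, if_neg hC]
        ring
    · intro b _ hb
      rw [URV, URV, if_neg hb]
      ring
    · intro h; exact absurd (Finset.mem_univ _) h
  rw [Matrix.trace]
  simp only [Matrix.diag_apply]
  rw [Finset.sum_congr rfl fun k _ => hdiag k]
  by_cases hC : (qn : ZMod N) = (q'n : ZMod N)
  · simp only [if_pos hC]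
    rw [zmod_sum N (fun k => Complex.exp (2 * Real.pi * Complex.I * s * ((((q'n : ZMod N) - k).val : ℕ) : ℂ) / N)
              * Complex.exp (2 * Real.pi * Complex.I * s' * ((k.val : ℕ) : ℂ) / N))]
    refine Finset.sum_congr rfl fun n _ => ?_
    have h1 : ((q'n : ZMod N) - (n : ℕ)) = (((q'n : ℤ) - (n : ℤ) : ℤ) : ZMod N) := by
      push_cast; ring
    have h2 : ((n : ℕ) : ZMod N) = (((n : ℤ) : ℤ) : ZMod N) := by push_cast; ring
    rw [h1, h2, Eval, Eval]
    norm_cast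
  · simp [hC]

lemma deltaN_eq (N : ℕ) [NeZero N] (m : ℤ) :
    deltaN N m = if (N:ℤ) ∣ m then 1 else 0 := by
  rw [deltaN]; exact deltaN_aux N m

theorem trace_Ahat_mul_Ahat (N : ℕ) [NeZero N] (q p q' p' : ℤ)
    (hq : 0 ≤ q) (hq' : q < N) (hp : 0 ≤ p) (hp' : p < N)
    (hq2 : 0 ≤ q') (hq2' : q' < N) (hp2 : 0 ≤ p') (hp2' : p' < N) :
    (Ahat N q p * Ahat N q' p').trace =
      (1 / (4 * N : ℂ)) * deltaN N (q' - q) * deltaN N (p' - p) := by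
  have hN0 : 0 < N := Nat.pos_of_ne_zero (NeZero.ne N)
  have hNc := Ncc N
  set qn := q.toNat with hqn
  set pn := p.toNat with hpn
  set q'n := q'.toNat with hq'n
  set p'n := p'.toNat with hp'n
  have hqnN : qn < N := by omega
  have hq'nN : q'n < N := by omega
  have hpc : ((pn : ℕ) : ℂ) = (p : ℂ) := by
    have h : ((pn : ℕ) : ℤ) = p := Int.toNat_of_nonneg hp
    exact_mod_cast congrArg (Int.cast : ℤ → ℂ) h
  have hp'c : ((p'n : ℕ) : ℂ) = (p' : ℂ) := by
    have h : ((p'n : ℕ) : ℤ) = p' := Int.toNat_of_nonneg hp2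
    exact_mod_cast congrArg (Int.cast : ℤ → ℂ) h
  have hq'c : ((q'n : ℕ) : ℂ) = (q' : ℂ) := by
    have h : ((q'n : ℕ) : ℤ) = q' := Int.toNat_of_nonneg hq2
    exact_mod_cast congrArg (Int.cast : ℤ → ℂ) h
  have hsc : ((N - pn : ℕ) : ℂ) = (N : ℂ) - (p : ℂ) := by
    rw [Nat.cast_sub (by omega), hpc]
  have hs'c : ((N - p'n : ℕ) : ℂ) = (N : ℂ) - (p' : ℂ) := by
    rw [Nat.cast_sub (by omega), hp'c]
  have hUq : (Uhat N) ^ q = (Uhat N) ^ qn := by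
    rw [← zpow_natCast (Uhat N) qn]; congr 1; omega
  have hUq' : (Uhat N) ^ q' = (Uhat N) ^ q'n := by
    rw [← zpow_natCast (Uhat N) q'n]; congr 1; omega
  have hVp : (Vhat N) ^ (-p) = (Vhat N) ^ ((N - pn : ℕ)) := Vzpow N p hp (by omega)
  have hVp' : (Vhat N) ^ (-p') = (Vhat N) ^ ((N - p'n : ℕ)) := Vzpow N p' hp2 (by omega)
  rw [Ahat, Ahat, hUq, hUq', hVp, hVp']
  rw [Matrix.smul_mul, Matrix.mul_smul, Matrix.trace_smul, Matrix.trace_smul]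
  rw [smul_eq_mul, smul_eq_mul, traceMM]
  rw [deltaN_eq, deltaN_eq]
  by_cases hqq : q = q'
  · have hCq : (qn : ZMod N) = (q'n : ZMod N) := by
      rw [natCast_inj_small N hqnN hq'nN]; omega
    rw [if_pos hCq, if_pos (show (N:ℤ) ∣ (q' - q) by rw [show q' - q = 0 by omega]; exact dvd_zero _)]
    have hterm : ∀ n ∈ Finset.range N,
        Complex.exp (2 * Real.pi * Complex.I * ((N - pn : ℕ) : ℂ) * (((q'n : ℤ) : ℂ) - (n : ℂ)) / N)
          * Complex.exp (2 * Real.pi * Complex.I * ((N - p'n : ℕ) : ℂ) * (n : ℂ) / N)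
        = Complex.exp (2 * Real.pi * Complex.I * ((N - pn : ℕ) : ℂ) * ((q'n : ℤ) : ℂ) / N)
          * Complex.exp (2 * Real.pi * Complex.I * ((p - p' : ℤ) : ℂ) * (n : ℂ) / N) := by
      intro n _
      rw [← Complex.exp_add, ← Complex.exp_add]
      congr 1
      rw [hsc, hs'c]
      push_cast
      field_simp
      ring
    rw [Finset.sum_congr rfl hterm, ← Finset.mul_sum, sum_exp N (p - p')]
    by_cases hpp : p = p'
    · rw [if_pos (show (N:ℤ) ∣ (p - p') by rw [show p - p' = 0 by omega]; exact dvd_zero _),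
        if_pos (show (N:ℤ) ∣ (p' - p) by rw [show p' - p = 0 by omega]; exact dvd_zero _)]
      have key : Complex.exp (Real.pi * Complex.I * (p : ℂ) * (q : ℂ) / N)
          * Complex.exp (Real.pi * Complex.I * (p' : ℂ) * (q' : ℂ) / N)
          * Complex.exp (2 * Real.pi * Complex.I * ((N - pn : ℕ) : ℂ) * ((q'n : ℤ) : ℂ) / N) = 1 := by
        rw [← Complex.exp_add, ← Complex.exp_add]
        have harg : Real.pi * Complex.I * (p : ℂ) * (q : ℂ) / N
            + Real.pi * Complex.I * (p' : ℂ) * (q' : ℂ) / N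
            + 2 * Real.pi * Complex.I * ((N - pn : ℕ) : ℂ) * ((q'n : ℤ) : ℂ) / N
            = 0 + (q : ℤ) * (2 * Real.pi * Complex.I) := by
          rw [hsc]
          have h1 : ((q'n : ℤ) : ℂ) = (q : ℂ) := by
            rw [show ((q'n : ℤ) : ℂ) = ((q'n : ℕ) : ℂ) by push_cast; ring, hq'c]
            exact_mod_cast (congrArg (Int.cast : ℤ → ℂ) hqq).symm
          rw [h1, ← hqq, ← hpp]
          push_cast
          field_simp
          ring
        exact (exp_congr_int q harg).trans Complex.exp_zero
      field_simp
      rw [show (Real.pi:ℂ) * Complex.I * 2 = 2 * Real.pi * Complex.I by ring]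
      linear_combination 4 * key
    · rw [if_neg (not_dvd_small N (by omega) (by omega) (by omega)),
        if_neg (not_dvd_small N (by omega) (by omega) (by omega))]
      ring
  · have hCq : ¬ (qn : ZMod N) = (q'n : ZMod N) := by
      rw [natCast_inj_small N hqnN hq'nN]; omega
    rw [if_neg hCq, if_neg (not_dvd_small N (by omega) (by omega) (by omega))]
    ring
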